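/- arXiv:2105.13875 — 2 statements merged into one kernel-verified Lean document; each statement's English description precedes it below -/
import Mathlib

section
/- As formal power series in q, the generating function identity Σ_{n≥0} σ_d mex(n) q^n = (−q; q)_∞ · Σ_{m≥0} q^{m(m+1)/2} / (−q; q)_m holds, i.e., the generating function of σ_d mex(n) equals the product of the generating function for partitions into distinct parts and Ramanujan's σ(q). -/
open PowerSeries Finset

/-- The set of partitions of `n` into distinct parts, encoded as finsets of
positive integers summing to `n`. -/
def Dpart (n : ℕ) : Finset (Finset ℕ) :=
  (Finset.Icc 1 n).powerset.filter (fun S => S.sum id = n)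

/-- The minimal excludant: the least positive integer not occurring as a part. -/
noncomputable def pmex (S : Finset ℕ) : ℕ := sInf {m : ℕ | 0 < m ∧ m ∉ S}

/-- The sum of minimal excludants over all distinct-parts partitions of `n`. -/
noncomputable def sigmadmex (n : ℕ) : ℕ := ∑ S ∈ Dpart n, pmex S

/-- `(−q;q)_∞ = Π_{k ≥ 1} (1 + q^k)` as a formal power series over `ℚ`: its `n`-th
coefficient only involves the factors with `k ≤ n`. -/
noncomputable def prodDistinct : PowerSeries ℚ :=
  PowerSeries.mk fun n =>
    coeff n (∏ k ∈ Finset.range (n + 1), (1 + (X : PowerSeries ℚ) ^ (k + 1)))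

/-- Ramanujan's `σ(q) = Σ_{m ≥ 0} q^{m(m+1)/2} / (−q;q)_m`: the term of index `m` has
order at least `m`, so the `n`-th coefficient only involves terms with `m ≤ n + 1`. -/
noncomputable def ramanujanSigma : PowerSeries ℚ :=
  PowerSeries.mk fun n =>
    coeff n (∑ m ∈ Finset.range (n + 2),
      (X : PowerSeries ℚ) ^ (m * (m + 1) / 2) *
        (∏ k ∈ Finset.range m, (1 + (X : PowerSeries ℚ) ^ (k + 1)))⁻¹)

/-!
`{1, …, m} ⊆ S` holds exactly for `m < mex S`, so `σ_d mex(n)` counts the pairs `(m, S)` where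
`S` is a partition of `n` into distinct parts containing `{1, …, m}`. Removing this staircase
leaves an arbitrary set of distinct parts `> m` summing to `n - m(m+1)/2`, with generating function
`q^{m(m+1)/2} ∏_{k>m} (1 + q^k) = q^{m(m+1)/2} (−q;q)_∞ / (−q;q)_m`; summing over `m` gives
`(−q;q)_∞ σ(q)`. Coefficients are compared one at a time, where only finitely many factors of
`(−q;q)_∞` and terms of `σ(q)` matter.
-/

theorem mem_Dpart_iff {n : ℕ} {S : Finset ℕ} : S ∈ Dpart n ↔ 0 ∉ S ∧ ∑ i ∈ S, i = n := by
  simp only [Dpart, mem_filter, mem_powerset, id_eq]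
  refine ⟨fun ⟨hS, hsum⟩ => ⟨fun h0 => by simpa using hS h0, hsum⟩, fun ⟨h0, hsum⟩ => ⟨?_, hsum⟩⟩
  intro x hx
  have hpos : x ≠ 0 := ne_of_mem_of_not_mem hx h0
  have hle : x ≤ ∑ i ∈ S, i := single_le_sum (f := fun i => i) (fun _ _ => Nat.zero_le _) hx
  rw [mem_Icc]
  omega

theorem pmex_spec (S : Finset ℕ) : 0 < pmex S ∧ pmex S ∉ S := by
  obtain ⟨k, hk⟩ := Infinite.exists_notMem_finset (insert 0 S)
  rw [mem_insert, not_or] at hk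
  exact Nat.sInf_mem (s := {m | 0 < m ∧ m ∉ S}) ⟨k, Nat.pos_of_ne_zero hk.1, hk.2⟩

theorem pmex_le {S : Finset ℕ} {k : ℕ} (hk : 0 < k) (hkS : k ∉ S) : pmex S ≤ k :=
  Nat.sInf_le ⟨hk, hkS⟩

theorem Icc_subset_iff_lt_pmex {S : Finset ℕ} {m : ℕ} : Icc 1 m ⊆ S ↔ m < pmex S := by
  obtain ⟨hpos, hnot⟩ := pmex_spec S
  constructor
  · intro h
    by_contra! hle
    exact hnot (h (mem_Icc.2 ⟨hpos, hle⟩))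
  · intro h t ht
    rw [mem_Icc] at ht
    by_contra htS
    have := pmex_le ht.1 htS
    omega

theorem pmex_eq_card_filter_Icc_subset {S : Finset ℕ} {N : ℕ} (h : pmex S ≤ N) :
    pmex S = #{m ∈ range N | Icc 1 m ⊆ S} := by
  have : {m ∈ range N | Icc 1 m ⊆ S} = range (pmex S) := by
    ext m
    simp only [mem_filter, mem_range, Icc_subset_iff_lt_pmex]
    omega
  rw [this, card_range]

theorem pmex_le_of_mem_Dpart {n : ℕ} {S : Finset ℕ} (hS : S ∈ Dpart n) : pmex S ≤ n + 1 := by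
  refine pmex_le n.succ_pos fun h => ?_
  have : S ⊆ Icc 1 n := (mem_powerset.1 (mem_filter.1 hS).1)
  simpa using this h

theorem sigmadmex_eq_sum_card (n : ℕ) :
    sigmadmex n = ∑ m ∈ range (n + 1), #{S ∈ Dpart n | Icc 1 m ⊆ S} := by
  rw [sigmadmex, sum_congr rfl fun S hS => pmex_eq_card_filter_Icc_subset (pmex_le_of_mem_Dpart hS)]
  exact sum_card_bipartiteAbove_eq_sum_card_bipartiteBelow (fun S m => Icc 1 m ⊆ S)

theorem sum_Icc_one_id (m : ℕ) : ∑ i ∈ Icc 1 m, i = m * (m + 1) / 2 := by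
  have := Finset.sum_range_id (m + 1)
  rw [range_eq_Ico, sum_eq_sum_Ico_succ_bot m.succ_pos, Nat.add_sub_cancel, mul_comm] at this
  simpa only [zero_add, Nat.succ_eq_add_one, Ico_add_one_right_eq_Icc] using this

theorem card_filter_Icc_subset_Dpart (n m : ℕ) :
    #{S ∈ Dpart n | Icc 1 m ⊆ S} =
      #{T ∈ (Ico (m + 1) (n + 1)).powerset | m * (m + 1) / 2 + ∑ k ∈ T, k = n} := by
  refine card_nbij' (· \ Icc 1 m) (Icc 1 m ∪ ·) ?_ ?_ ?_ ?_
  · intro S hS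
    simp only [mem_coe, mem_filter, mem_powerset, mem_Dpart_iff] at hS ⊢
    obtain ⟨⟨h0, hsum⟩, hm⟩ := hS
    refine ⟨fun x hx => ?_, ?_⟩
    · obtain ⟨hxS, hxm⟩ := mem_sdiff.1 hx
      have : x ≤ ∑ i ∈ S, i := single_le_sum (f := fun i => i) (fun _ _ => Nat.zero_le _) hxS
      have : x ≠ 0 := ne_of_mem_of_not_mem hxS h0
      simp only [mem_Icc, mem_Ico] at hxm ⊢
      omega
    · rw [← sum_Icc_one_id, add_comm, sum_sdiff hm, hsum]
  · intro T hT
    simp only [mem_coe, mem_filter, mem_Dpart_iff, mem_powerset] at hT ⊢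
    obtain ⟨hT, hsum⟩ := hT
    have hdisj : Disjoint (Icc 1 m) T := disjoint_left.2 fun x hx hxT => by
      simp only [mem_Icc] at hx
      have := mem_Ico.1 (hT hxT)
      omega
    refine ⟨⟨fun h0 => ?_, ?_⟩, subset_union_left⟩
    · rcases mem_union.1 h0 with h | h
      · simp at h
      · simpa using hT h
    · rw [sum_union hdisj, sum_Icc_one_id, hsum]
  · intro S hS
    exact union_sdiff_of_subset (mem_filter.1 hS).2
  · intro T hT
    refine union_sdiff_cancel_left (disjoint_left.2 fun x hx hxT => ?_)
    simp only [mem_coe, mem_filter, mem_powerset] at hT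
    have := mem_Ico.1 (hT.1 hxT)
    simp only [mem_Icc] at hx
    omega

theorem PowerSeries.coeff_mul_congr {R : Type*} [Semiring R] {f f' g g' : R⟦X⟧} {n : ℕ}
    (hf : ∀ i ≤ n, coeff i f = coeff i f') (hg : ∀ i ≤ n, coeff i g = coeff i g') :
    coeff n (f * g) = coeff n (f' * g') := by
  rw [coeff_mul, coeff_mul]
  refine sum_congr rfl fun p hp => ?_
  have := mem_antidiagonal.1 hp
  rw [hf p.1 (by omega), hg p.2 (by omega)]

section NegQPochhammer

variable (R : Type*) [CommSemiring R]

/-- `(−q; q)_N`. -/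
noncomputable def negQPoch (N : ℕ) : R⟦X⟧ :=
  ∏ k ∈ range N, (1 + X ^ (k + 1))

variable {R}

theorem coeff_X_pow_mul_prod_one_add_X_pow (a n : ℕ) (s : Finset ℕ) :
    coeff n ((X : R⟦X⟧) ^ a * ∏ k ∈ s, (1 + (X : R⟦X⟧) ^ k)) =
      #{T ∈ s.powerset | a + ∑ k ∈ T, k = n} := by
  rw [prod_one_add, mul_sum, map_sum, card_filter]
  push_cast
  refine sum_congr rfl fun T _ => ?_
  rw [prod_pow_eq_pow_sum, ← pow_add, coeff_X_pow]
  simp_rw [eq_comm (a := n)]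

theorem constantCoeff_negQPoch (N : ℕ) : constantCoeff (negQPoch R N) = 1 := by
  simp [negQPoch, map_prod]

theorem coeff_negQPoch_succ {i N : ℕ} (h : i ≤ N) :
    coeff i (negQPoch R (N + 1)) = coeff i (negQPoch R N) := by
  rw [negQPoch, prod_range_succ, ← negQPoch, mul_add, mul_one, map_add, mul_comm,
    coeff_X_pow_mul', if_neg (by omega), add_zero]

theorem coeff_negQPoch_of_le {i N : ℕ} (h : i ≤ N) :
    coeff i (negQPoch R N) = coeff i (negQPoch R i) := by
  induction N, h using Nat.le_induction with
  | base => rfl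
  | succ N hiN ih => rw [coeff_negQPoch_succ hiN, ih]

theorem negQPoch_mul_prod_Ico {m N : ℕ} (h : m ≤ N) :
    negQPoch R m * ∏ k ∈ Ico (m + 1) (N + 1), (1 + X ^ k) = negQPoch R N := by
  rw [negQPoch, negQPoch, ← prod_range_mul_prod_Ico _ h, ← prod_Ico_add']

end NegQPochhammer

theorem coeff_prodDistinct {i N : ℕ} (h : i ≤ N) :
    coeff i prodDistinct = coeff i (negQPoch ℚ N) := by
  rw [prodDistinct, coeff_mk]
  change coeff i (negQPoch ℚ (i + 1)) = _
  rw [coeff_negQPoch_of_le i.le_succ, coeff_negQPoch_of_le h]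

noncomputable def sigmaPartial (M : ℕ) : ℚ⟦X⟧ :=
  ∑ m ∈ range M, X ^ (m * (m + 1) / 2) * (negQPoch ℚ m)⁻¹

theorem coeff_sigmaPartial_of_lt {j M : ℕ} (h : j < M) :
    coeff j (sigmaPartial M) = coeff j (sigmaPartial (j + 1)) := by
  rw [sigmaPartial, sigmaPartial, map_sum, map_sum]
  refine (sum_subset (range_subset_range.2 h) fun m hm hm' => ?_).symm
  simp only [mem_range, not_lt] at hm hm'
  have : m ≤ m * (m + 1) / 2 := (Nat.le_div_iff_mul_le two_pos).2 (by nlinarith)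
  rw [coeff_X_pow_mul', if_neg (by omega)]

theorem coeff_ramanujanSigma {j M : ℕ} (h : j < M) :
    coeff j ramanujanSigma = coeff j (sigmaPartial M) := by
  rw [ramanujanSigma, coeff_mk]
  change coeff j (sigmaPartial (j + 2)) = _
  rw [coeff_sigmaPartial_of_lt (by omega), coeff_sigmaPartial_of_lt h]

theorem negQPoch_mul_sigmaPartial (n : ℕ) :
    negQPoch ℚ n * sigmaPartial (n + 1) =
      ∑ m ∈ range (n + 1), X ^ (m * (m + 1) / 2) * ∏ k ∈ Ico (m + 1) (n + 1), (1 + X ^ k) := by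
  rw [sigmaPartial, mul_sum]
  refine sum_congr rfl fun m hm => ?_
  rw [← negQPoch_mul_prod_Ico (Nat.lt_succ_iff.1 (mem_range.1 hm))]
  have := PowerSeries.mul_inv_cancel (negQPoch ℚ m) (by simp [constantCoeff_negQPoch])
  linear_combination (X ^ (m * (m + 1) / 2) * ∏ k ∈ Ico (m + 1) (n + 1), (1 + X ^ k)) * this

theorem coeff_prodDistinct_mul_ramanujanSigma (n : ℕ) :
    coeff n (prodDistinct * ramanujanSigma) =
      ∑ m ∈ range (n + 1),
        (#{T ∈ (Ico (m + 1) (n + 1)).powerset | m * (m + 1) / 2 + ∑ k ∈ T, k = n} : ℚ) := by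
  rw [coeff_mul_congr (fun i hi => coeff_prodDistinct hi)
    (fun i hi => coeff_ramanujanSigma (Nat.lt_succ_of_le hi)), negQPoch_mul_sigmaPartial, map_sum]
  exact sum_congr rfl fun m _ => coeff_X_pow_mul_prod_one_add_X_pow _ _ _

/-- `Σ_{n≥0} σ_d mex(n) q^n = (−q;q)_∞ · σ(q)`. -/
theorem stmt_4 :
    (PowerSeries.mk fun n => (sigmadmex n : ℚ)) = prodDistinct * ramanujanSigma := by
  ext n
  rw [coeff_mk, coeff_prodDistinct_mul_ramanujanSigma, sigmadmex_eq_sum_card]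
  push_cast
  exact sum_congr rfl fun m _ => by rw [card_filter_Icc_subset_Dpart]
end

section
/- The double generating function for distinct-parts partitions by minimal excludant satisfies Σ_{n,m} p_d^{mex}(m,n) z^m q^n = (−q; q)_∞ · Σ_{m≥1} z^m q^{m(m−1)/2} / (−q; q)_m, as a formal power series identity in z and q. -/
/-!
A distinct-parts partition with mex `m > 0` consists of `1, …, m - 1` together with parts
larger than `m`, so its generating function is `q^(m(m-1)/2) · Π_{k>m} (1 + q^k)`. Splitting
an arbitrary distinct-parts partition into its parts `≤ m` and its parts `> m` gives
`(−q;q)_∞ = (−q;q)_m · Π_{k>m} (1 + q^k)`, and dividing by `(−q;q)_m` gives the coefficient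
of `z^m`.
-/

open PowerSeries Finset

/-- `p_d^{mex}(m, n)`: the number of distinct-parts partitions of `n` with minimal
excludant `m`. -/
noncomputable def pdmexCount (m n : ℕ) : ℕ := ((Dpart n).filter (fun S => pmex S = m)).card

lemma mem_Dpart {n : ℕ} {S : Finset ℕ} :
    S ∈ Dpart n ↔ (∀ x ∈ S, 0 < x) ∧ S.sum id = n := by
  simp only [Dpart, mem_filter, mem_powerset]
  refine ⟨fun ⟨hsub, hsum⟩ => ⟨fun x hx => (mem_Icc.1 (hsub hx)).1, hsum⟩,
    fun ⟨hpos, hsum⟩ => ⟨fun x hx => mem_Icc.2 ⟨hpos x hx, ?_⟩, hsum⟩⟩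
  exact hsum ▸ single_le_sum (f := id) (fun _ _ => Nat.zero_le _) hx

lemma le_of_mem_Dpart {n x : ℕ} {S : Finset ℕ} (hS : S ∈ Dpart n) (hx : x ∈ S) : x ≤ n :=
  (mem_Icc.1 (mem_powerset.1 (mem_filter.1 hS).1 hx)).2

lemma mem_Dpart_filter {n : ℕ} {S : Finset ℕ} (hS : S ∈ Dpart n) (p : ℕ → Prop)
    [DecidablePred p] :
    S.filter p ∈ Dpart ((S.filter p).sum id) :=
  mem_Dpart.2 ⟨fun x hx => (mem_Dpart.1 hS).1 x (mem_filter.1 hx).1, rfl⟩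

lemma isLeast_pmex (S : Finset ℕ) : IsLeast {k : ℕ | 0 < k ∧ k ∉ S} (pmex S) := by
  have hne : {k : ℕ | 0 < k ∧ k ∉ S}.Nonempty :=
    ⟨S.sup id + 1, Nat.succ_pos _, fun h => Nat.not_succ_le_self _ (le_sup (f := id) h)⟩
  exact ⟨Nat.sInf_mem hne, fun k hk => Nat.sInf_le hk⟩

lemma pmex_pos (S : Finset ℕ) : 0 < pmex S := (isLeast_pmex S).1.1

lemma Icc_one_pmex_sub_one_subset (S : Finset ℕ) : Icc 1 (pmex S - 1) ⊆ S := fun k hk => by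
  have := mem_Icc.1 hk
  by_contra hkS
  have := (isLeast_pmex S).2 ⟨by omega, hkS⟩
  omega

lemma pmex_eq_iff {S : Finset ℕ} {m : ℕ} (hm : 0 < m) :
    pmex S = m ↔ m ∉ S ∧ Icc 1 (m - 1) ⊆ S := by
  refine ⟨fun h => h ▸ ⟨(isLeast_pmex S).1.2, Icc_one_pmex_sub_one_subset S⟩,
    fun ⟨hmS, hsub⟩ => IsLeast.csInf_eq ⟨⟨hm, hmS⟩, fun k ⟨hk, hkS⟩ => ?_⟩⟩
  by_contra hlt
  exact hkS (hsub (mem_Icc.2 ⟨hk, by omega⟩))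

noncomputable def distinctPartsGF (p : ℕ → Prop) [DecidablePred p] : PowerSeries ℚ :=
  mk fun n => ((Dpart n).filter fun S => ∀ x ∈ S, p x).card

lemma coeff_sum_prod_X_pow (n : ℕ) (P : Finset (Finset ℕ)) :
    coeff n (∑ t ∈ P, ∏ i ∈ t, (X : PowerSeries ℚ) ^ i) =
      (P.filter fun t => t.sum id = n).card := by
  have hprod (t : Finset ℕ) : ∏ i ∈ t, (X : PowerSeries ℚ) ^ i = X ^ t.sum id :=
    prod_pow_eq_pow_sum t id X
  simp only [hprod, map_sum, coeff_X_pow]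
  rw [sum_boole]
  simp only [eq_comm]

lemma prod_range_one_add_X_pow (m : ℕ) :
    ∏ k ∈ range m, (1 + (X : PowerSeries ℚ) ^ (k + 1)) = distinctPartsGF (· ≤ m) := by
  have hreindex : ∏ k ∈ range m, (1 + (X : PowerSeries ℚ) ^ (k + 1)) =
      ∏ k ∈ Icc 1 m, (1 + (X : PowerSeries ℚ) ^ k) := by
    rw [range_eq_Ico, prod_Ico_add' (fun k => 1 + (X : PowerSeries ℚ) ^ k)]
    rfl
  ext n
  rw [hreindex, prod_one_add, coeff_sum_prod_X_pow, distinctPartsGF, coeff_mk]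
  congr 2
  ext S
  simp only [mem_filter, mem_powerset, mem_Dpart, subset_iff, mem_Icc]
  exact ⟨fun ⟨h, hsum⟩ => ⟨⟨fun x hx => (h hx).1, hsum⟩, fun x hx => (h hx).2⟩,
    fun ⟨⟨hpos, hsum⟩, hle⟩ => ⟨fun x hx => ⟨hpos x hx, hle x hx⟩, hsum⟩⟩

lemma prodDistinct_eq_mk : prodDistinct = mk fun n => ((Dpart n).card : ℚ) := by
  ext n
  rw [prodDistinct, coeff_mk, coeff_mk, prod_range_one_add_X_pow, distinctPartsGF, coeff_mk,
    filter_true_of_mem fun S hS x hx => (le_of_mem_Dpart hS hx).trans n.le_succ]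

lemma distinctPartsGF_mul_distinctPartsGF_not (p : ℕ → Prop) [DecidablePred p] :
    distinctPartsGF p * distinctPartsGF (fun x => ¬ p x) = mk fun n => ((Dpart n).card : ℚ) := by
  ext n
  simp only [coeff_mul, distinctPartsGF, coeff_mk]
  norm_cast
  simp_rw [← card_product]
  rw [← card_sigma]
  refine card_nbij' (fun x => x.2.1 ∪ x.2.2)
    (fun S => ⟨((S.filter p).sum id, (S.filter (fun x => ¬ p x)).sum id),
      (S.filter p, S.filter (fun x => ¬ p x))⟩)
    ?_ ?_ ?_ ?_
  · rintro ⟨⟨i, j⟩, A, B⟩ hx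
    simp only [coe_sigma, Set.mem_sigma_iff, mem_coe, HasAntidiagonal.mem_antidiagonal, mem_product,
      mem_filter, mem_Dpart] at hx ⊢
    obtain ⟨hij, ⟨⟨hApos, hAsum⟩, hAp⟩, ⟨hBpos, hBsum⟩, hBp⟩ := hx
    have hdisj : Disjoint A B := disjoint_left.2 fun x hxA hxB => hBp x hxB (hAp x hxA)
    refine ⟨fun x hx => (mem_union.1 hx).elim (hApos x) (hBpos x), ?_⟩
    rw [sum_union hdisj, hAsum, hBsum, hij]
  · intro S hS
    simp only [coe_sigma, Set.mem_sigma_iff, mem_coe, HasAntidiagonal.mem_antidiagonal, mem_product,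
      mem_filter] at hS ⊢
    refine ⟨by rw [sum_filter_add_sum_filter_not, (mem_Dpart.1 hS).2],
      ⟨mem_Dpart_filter hS p, fun _ hx => hx.2⟩,
      ⟨mem_Dpart_filter hS (fun x => ¬ p x), fun _ hx => hx.2⟩⟩
  · rintro ⟨⟨i, j⟩, A, B⟩ hx
    simp only [coe_sigma, Set.mem_sigma_iff, mem_coe, HasAntidiagonal.mem_antidiagonal, mem_product,
      mem_filter, mem_Dpart] at hx
    obtain ⟨-, ⟨⟨-, hAsum⟩, hAp⟩, ⟨-, hBsum⟩, hBp⟩ := hx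
    have hfilter : (A ∪ B).filter p = A ∧ (A ∪ B).filter (fun x => ¬ p x) = B := by
      rw [filter_union, filter_union, filter_true_of_mem hAp, filter_false_of_mem hBp,
        filter_false_of_mem fun x hx h => h (hAp x hx), filter_true_of_mem hBp,
        union_empty, empty_union]
      exact ⟨rfl, rfl⟩
    simp only [hfilter, hAsum, hBsum]
  · intro S _
    exact filter_union_filter_not_eq p S

lemma sum_Icc_one_sub_one (m : ℕ) : (Icc 1 (m - 1)).sum id = m * (m - 1) / 2 := by
  rw [← sum_range_id]
  refine sum_subset (fun x hx => ?_) (fun x hxm hx => ?_)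
  · simp only [mem_Icc, mem_range] at hx ⊢; omega
  · simp only [mem_Icc, mem_range, not_and, not_le] at hxm hx
    simp only [id]
    omega

lemma pdmexCount_zero (n : ℕ) : pdmexCount 0 n = 0 := by
  rw [pdmexCount, card_eq_zero, filter_eq_empty_iff]
  exact fun {S} _ h => (pmex_pos S).ne' h

lemma pdmexCount_of_lt {m n : ℕ} (hn : n < m * (m - 1) / 2) : pdmexCount m n = 0 := by
  rw [pdmexCount, card_eq_zero, filter_eq_empty_iff]
  rintro S hS rfl
  have : (Icc 1 (pmex S - 1)).sum id ≤ S.sum id :=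
    sum_le_sum_of_subset (Icc_one_pmex_sub_one_subset S)
  rw [sum_Icc_one_sub_one, (mem_Dpart.1 hS).2] at this
  omega

lemma pdmexCount_add {m : ℕ} (hm : 0 < m) (n : ℕ) :
    pdmexCount m (n + m * (m - 1) / 2) = ((Dpart n).filter fun B => ∀ x ∈ B, m < x).card := by
  refine card_nbij' (· \ Icc 1 (m - 1)) (· ∪ Icc 1 (m - 1))
    (fun S hS => ?_) (fun B hB => ?_) (fun S hS => ?_) (fun B hB => ?_)
  · simp only [coe_filter, Set.mem_ofPred_eq, mem_Dpart, pmex_eq_iff hm] at hS ⊢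
    obtain ⟨⟨hpos, hsum⟩, hmS, hIS⟩ := hS
    refine ⟨⟨fun x hx => hpos x (mem_sdiff.1 hx).1, ?_⟩, fun x hx => ?_⟩
    · have : (S \ Icc 1 (m - 1)).sum id + (Icc 1 (m - 1)).sum id = S.sum id := sum_sdiff hIS
      rw [hsum, sum_Icc_one_sub_one] at this
      omega
    · obtain ⟨hxS, hxI⟩ := mem_sdiff.1 hx
      have := hpos x hxS
      have : x ≠ m := fun h => hmS (h ▸ hxS)
      simp only [mem_Icc, not_and, not_le] at hxI
      omega
  · simp only [coe_filter, Set.mem_ofPred_eq, mem_Dpart, pmex_eq_iff hm] at hB ⊢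
    obtain ⟨⟨hpos, hsum⟩, hBm⟩ := hB
    have hdisj : Disjoint B (Icc 1 (m - 1)) := disjoint_left.2 fun x hxB hxI => by
      have := hBm x hxB
      simp only [mem_Icc] at hxI
      omega
    refine ⟨⟨fun x hx => ?_, ?_⟩, fun hmem => ?_, subset_union_right⟩
    · rcases mem_union.1 hx with hxB | hxI
      · exact hpos x hxB
      · exact (mem_Icc.1 hxI).1
    · rw [sum_union hdisj, hsum, sum_Icc_one_sub_one]
    · rcases mem_union.1 hmem with hmB | hmI
      · exact lt_irrefl m (hBm m hmB)
      · have := (mem_Icc.1 hmI).2; omega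
  · simp only [coe_filter, Set.mem_ofPred_eq, pmex_eq_iff hm] at hS
    exact sdiff_union_of_subset hS.2.2
  · simp only [coe_filter, Set.mem_ofPred_eq] at hB
    refine union_sdiff_cancel_right (disjoint_left.2 fun x hxB hxI => ?_)
    have := hB.2 x hxB
    simp only [mem_Icc] at hxI
    omega

lemma mk_pdmexCount {m : ℕ} (hm : 0 < m) :
    (mk fun n => (pdmexCount m n : ℚ)) = X ^ (m * (m - 1) / 2) * distinctPartsGF (m < ·) := by
  ext n
  rw [coeff_X_pow_mul', coeff_mk, distinctPartsGF, coeff_mk]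
  split_ifs with hn
  · rw [← pdmexCount_add hm, Nat.sub_add_cancel hn]
  · rw [pdmexCount_of_lt (not_le.1 hn), Nat.cast_zero]

/-- `Σ_{n,m} p_d^{mex}(m,n) z^m q^n = (−q;q)_∞ Σ_{m≥1} z^m q^{m(m−1)/2}/(−q;q)_m`,
as power series in `z` whose coefficients are power series in `q`. -/
theorem stmt_14 :
    (PowerSeries.mk fun m => PowerSeries.mk fun n => (pdmexCount m n : ℚ)) =
      (PowerSeries.C prodDistinct) *
        (PowerSeries.mk fun m =>
          if m = 0 then 0 else
            (X : PowerSeries ℚ) ^ (m * (m - 1) / 2) *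
              (∏ k ∈ Finset.range m, (1 + (X : PowerSeries ℚ) ^ (k + 1)))⁻¹) := by
  ext m : 1
  rw [coeff_mk, coeff_C_mul, coeff_mk]
  rcases Nat.eq_zero_or_pos m with rfl | hm
  · ext n
    simp [pdmexCount_zero]
  have hunit : constantCoeff (∏ k ∈ range m, (1 + (X : PowerSeries ℚ) ^ (k + 1))) ≠ 0 := by
    simp [map_prod]
  rw [if_neg hm.ne', ← mul_assoc, eq_mul_inv_iff_mul_eq hunit, mk_pdmexCount hm,
    prod_range_one_add_X_pow, prodDistinct_eq_mk,
    ← distinctPartsGF_mul_distinctPartsGF_not (· ≤ m)]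
  have hcompl : distinctPartsGF (fun x => ¬ x ≤ m) = distinctPartsGF (m < ·) := by
    simp only [distinctPartsGF, not_le]
  rw [hcompl]
  ring
end
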